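/- Consider n qubits on the vertices of a graph G = (V,E), a probability distribution {p_e} on E with q_i := (1/2)∑_{e∋i} p_e strictly positive for every vertex i, reset dissipators D_i(ρ) = Tr_i(ρ) ⊗ W_i with W_i = (1/2)(1 + λ_i Z), λ_i ∈ [0,1), two-qubit channels F_e acting only on the endpoints of e, and the super-operators E_0(ρ) = ∑_i q_i D_i(ρ), E_1(ρ) = ∑_e p_e F_e(ρ) − E_0(ρ), ρ_0 = ⊗_i W_i, K(ρ) = ρ − E_0(ρ) + Tr(ρ)·ρ_0, and T = E_1* ∘ (K*)⁻¹. Then for every k ≥ 0 and every operator O ∈ S_k (the span of dual Wauli operators Q̃_α with |α| ≤ k), the operator T(O) lies in S_{k+1}; moreover the support of T(O) is contained in the ball of radius 1 (in the graph metric of G) around the support of O. -/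

import Mathlib

/-!
Everything is read off in the dual Wauli basis. `D_i Q_β` is `Q_β` or `0` according as `β_i = 0`,
so `E₀` and `K` are diagonal on the `Q_β`; by duality `K*`, hence `(K*)⁻¹`, is diagonal on the
`Q̃_α`. An operator is supported on `S` exactly when its coefficients `Tr(Q_β ·)` vanish for
`supp β ⊄ S`, since `Q_β` is traceless on every qubit of `supp β`. The Heisenberg-picture dual of
a channel on an edge `e` fixes `Q̃_α` when `e` misses `supp α`, and otherwise produces an operator
supported on `supp α ∪ e`, which adds at most one vertex, adjacent to `supp α`. Expanding `O` in the
`Q̃_α` then gives both claims.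
-/

namespace SSP

noncomputable section

open Matrix
open scoped ComplexOrder

/-- Computational basis labels for `n` qubits. -/
abbrev Idx (n : ℕ) := Fin n → Fin 2

/-- Operators (matrices) on the Hilbert space of `n` qubits. -/
abbrev Op (n : ℕ) := Matrix (Idx n) (Idx n) ℂ

/-- Super-operators on `n` qubits. -/
abbrev SOp (n : ℕ) := Op n →ₗ[ℂ] Op n

/-- The operator norm (largest singular value) of a complex matrix. -/
noncomputable def opNorm {m : Type*} [Fintype m] [DecidableEq m]
    (M : Matrix m m ℂ) : ℝ :=
  ‖Matrix.toEuclideanCLM (𝕜 := ℂ) M‖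

/-- A density matrix: positive semidefinite with unit trace. -/
def IsDensity {n : ℕ} (ρ : Op n) : Prop := ρ.PosSemidef ∧ ρ.trace = 1

/-- An operator is supported on the set `S` of qubits if it has the form
`Ô_S ⊗ 1` on the remaining qubits. -/
def SupportedOn {n : ℕ} (S : Set (Fin n)) (M : Op n) : Prop :=
  (∀ x y : Idx n, (∃ i ∉ S, x i ≠ y i) → M x y = 0) ∧
  (∀ x y x' y' : Idx n,
      (∀ i ∈ S, x i = x' i) → (∀ i ∈ S, y i = y' i) →
      (∀ i ∉ S, x i = y i) → (∀ i ∉ S, x' i = y' i) → M x y = M x' y')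

/-- The support of an operator: the smallest set of qubits supporting it
(the intersection of all supporting sets). -/
def suppOp {n : ℕ} (M : Op n) : Set (Fin n) :=
  {i | ∀ S : Set (Fin n), SupportedOn S M → i ∈ S}

/-- `E` is a quantum channel (CPTP map) acting only on the qubits in `S`:
it has a Kraus representation whose Kraus operators are all supported on `S`. -/
def IsChannelOn {n : ℕ} (S : Set (Fin n)) (E : SOp n) : Prop :=
  ∃ (m : ℕ) (F : Fin m → Op n),
    (∀ j, SupportedOn S (F j)) ∧
    (∑ j, (F j)ᴴ * F j = 1) ∧
    (∀ ρ, E ρ = ∑ j, F j * ρ * (F j)ᴴ)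

/-- A quantum channel on the whole system. -/
def IsChannel {n : ℕ} (E : SOp n) : Prop := IsChannelOn Set.univ E

/-- `Estar` is the adjoint of `E` with respect to the Hilbert–Schmidt
inner product `⟨A,B⟩ = Tr(A†B)`. -/
def IsHSAdjoint {n : ℕ} (E Estar : SOp n) : Prop :=
  ∀ A B : Op n, ((Estar A)ᴴ * B).trace = (Aᴴ * (E B)).trace

/-- An ergodic channel: it has a unique fixed point among density matrices,
this fixed point is full rank (positive definite), and there is no other
eigenvalue of modulus one. -/
def IsErgodic {n : ℕ} (E : SOp n) : Prop :=
  (∃ σ : Op n, IsDensity σ ∧ σ.PosDef ∧ E σ = σ ∧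
      ∀ ρ : Op n, IsDensity ρ → E ρ = ρ → ρ = σ) ∧
  (∀ μ : ℂ, Module.End.HasEigenvalue (E : Module.End ℂ (Op n)) μ → μ = 1 ∨ ‖μ‖ < 1)

/-- The set of qubits (endpoints) of an edge. -/
def edgeQubits {n : ℕ} (e : Sym2 (Fin n)) : Set (Fin n) := {i | i ∈ e}

/-- Finset of endpoints of an edge. -/
def edgeFinset' {n : ℕ} (e : Sym2 (Fin n)) : Finset (Fin n) :=
  Finset.univ.filter (· ∈ e)

/-- A Hamiltonian is geometrically `k`-local w.r.t. the graph `G`: it is a sum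
of Hermitian terms, each supported on a connected subset of `G` with at most
`k` vertices. -/
def GeomLocal {n : ℕ} (G : SimpleGraph (Fin n)) (k : ℕ) (H : Op n) : Prop :=
  ∃ (m : ℕ) (h : Fin m → Op n) (S : Fin m → Set (Fin n)),
    H = ∑ j, h j ∧
    ∀ j, (h j).IsHermitian ∧ SupportedOn (S j) (h j) ∧
      (S j).ncard ≤ k ∧ (G.induce (S j)).Preconnected

/-- The ball of radius `k` around a set of vertices, in the graph metric. -/
def Ball {n : ℕ} (G : SimpleGraph (Fin n)) (X : Set (Fin n)) (k : ℕ) :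
    Set (Fin n) :=
  {v | ∃ u ∈ X, ∃ w : G.Walk u v, w.length ≤ k}

/- Pauli matrices and the Wauli bases. -/
def PX : Matrix (Fin 2) (Fin 2) ℂ := !![0, 1; 1, 0]
def PY : Matrix (Fin 2) (Fin 2) ℂ := !![0, -Complex.I; Complex.I, 0]
def PZ : Matrix (Fin 2) (Fin 2) ℂ := !![1, 0; 0, -1]

/-- `W = (1/2)(1 + λ Z)`. -/
noncomputable def Wmat (l : ℝ) : Matrix (Fin 2) (Fin 2) ℂ :=
  (2⁻¹ : ℂ) • (1 + (l : ℂ) • PZ)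

/-- Single-qubit Wauli basis `{W, X/2, Y/2, Z/2}`. -/
noncomputable def wauli (l : ℝ) : Fin 4 → Matrix (Fin 2) (Fin 2) ℂ :=
  ![Wmat l, (2⁻¹ : ℂ) • PX, (2⁻¹ : ℂ) • PY, (2⁻¹ : ℂ) • PZ]

/-- Single-qubit dual Wauli basis `{1, X, Y, Z - λ·1}`. -/
noncomputable def dualWauli (l : ℝ) : Fin 4 → Matrix (Fin 2) (Fin 2) ℂ :=
  ![1, PX, PY, PZ - (l : ℂ) • 1]

/-- The `n`-qubit Wauli basis element `Q_α` (tensor product of the `Q_{α_i}`). -/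
noncomputable def Qmat {n : ℕ} (lam : Fin n → ℝ) (α : Fin n → Fin 4) : Op n :=
  Matrix.of fun x y => ∏ i, wauli (lam i) (α i) (x i) (y i)

/-- The `n`-qubit dual Wauli basis element `Q̃_α`. -/
noncomputable def Qdual {n : ℕ} (lam : Fin n → ℝ) (α : Fin n → Fin 4) : Op n :=
  Matrix.of fun x y => ∏ i, dualWauli (lam i) (α i) (x i) (y i)

/-- The support of a Wauli string. -/
def suppStr {n : ℕ} (α : Fin n → Fin 4) : Finset (Fin n) :=
  Finset.univ.filter (fun i => α i ≠ 0)

/-- The coefficient `c_α = Tr(Q_α O)` of the expansion `O = ∑_α c_α Q̃_α`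
in the dual Wauli basis. -/
noncomputable def QCoeff {n : ℕ} (lam : Fin n → ℝ) (O : Op n)
    (α : Fin n → Fin 4) : ℂ :=
  (Qmat lam α * O).trace

/-- The `Q1` norm: the `ℓ¹` norm of the dual-Wauli coefficient vector. -/
noncomputable def Q1Norm {n : ℕ} (lam : Fin n → ℝ) (O : Op n) : ℝ :=
  ∑ α : Fin n → Fin 4, ‖QCoeff lam O α‖

/-- The subspace `S_k`: the span of the dual Wauli operators `Q̃_α` with
`|α| ≤ k`. -/
def Sk {n : ℕ} (lam : Fin n → ℝ) (k : ℕ) : Submodule ℂ (Op n) :=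
  Submodule.span ℂ {Q | ∃ α : Fin n → Fin 4, (suppStr α).card ≤ k ∧ Q = Qdual lam α}

/-- The trace norm `Tr √(O†O)` of a matrix. -/
noncomputable def traceNorm {m : Type*} [Fintype m] [DecidableEq m]
    (M : Matrix m m ℂ) : ℝ :=
  (((Matrix.posSemidef_conjTranspose_mul_self M).1.eigenvectorUnitary.1 *
      Matrix.diagonal (((↑) : ℝ → ℂ) ∘ (√·) ∘ (Matrix.posSemidef_conjTranspose_mul_self M).1.eigenvalues) *
      (star (Matrix.posSemidef_conjTranspose_mul_self M).1.eigenvectorUnitary : Matrix m m ℂ)).trace).re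

variable {n : ℕ}

section SingleQubit

variable (l : ℝ)

lemma trace_wauli (a : Fin 4) : (wauli l a).trace = if a = 0 then 1 else 0 := by
  fin_cases a <;> simp [wauli, Wmat, PX, PY, PZ, Matrix.trace_fin_two]

lemma trace_wauli_mul_dualWauli (a b : Fin 4) :
    (wauli l a * dualWauli l b).trace = if a = b then 1 else 0 := by
  fin_cases a <;> fin_cases b <;>
    simp [wauli, dualWauli, Wmat, PX, PY, PZ, Matrix.trace_fin_two, Matrix.one_fin_two,
      Complex.ext_iff] <;> ring

lemma conjTranspose_wauli (a : Fin 4) : (wauli l a)ᴴ = wauli l a := by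
  fin_cases a <;> ext i j <;> fin_cases i <;> fin_cases j <;>
    simp [wauli, Wmat, PX, PY, PZ]

lemma conjTranspose_dualWauli (a : Fin 4) : (dualWauli l a)ᴴ = dualWauli l a := by
  fin_cases a <;> ext i j <;> fin_cases i <;> fin_cases j <;>
    simp [dualWauli, PX, PY, PZ]

lemma wauli_add_one_add_one {a : Fin 4} (ha : a ≠ 0) (b : Fin 2) :
    wauli l a (b + 1) (b + 1) = -wauli l a b b := by
  fin_cases a <;> fin_cases b <;> simp_all [wauli, PX, PY, PZ]

end SingleQubit

section ProdMat

/-- The tensor product `⊗ᵢ f i` of single-qubit matrices. -/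
def prodMat (f : Fin n → Matrix (Fin 2) (Fin 2) ℂ) : Op n :=
  Matrix.of fun x y => ∏ i, f i (x i) (y i)

lemma Qmat_eq_prodMat (lam : Fin n → ℝ) (α : Fin n → Fin 4) :
    Qmat lam α = prodMat fun i => wauli (lam i) (α i) := rfl

lemma Qdual_eq_prodMat (lam : Fin n → ℝ) (α : Fin n → Fin 4) :
    Qdual lam α = prodMat fun i => dualWauli (lam i) (α i) := rfl

lemma prodMat_mul (f g : Fin n → Matrix (Fin 2) (Fin 2) ℂ) :
    prodMat f * prodMat g = prodMat fun i => f i * g i := by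
  ext x y
  simp only [prodMat, Matrix.mul_apply, Matrix.of_apply, ← Finset.prod_mul_distrib]
  exact (Fintype.prod_sum fun i b => f i (x i) b * g i b (y i)).symm

lemma trace_prodMat (f : Fin n → Matrix (Fin 2) (Fin 2) ℂ) :
    (prodMat f).trace = ∏ i, (f i).trace := by
  simp only [Matrix.trace, Matrix.diag_apply, prodMat, Matrix.of_apply]
  exact (Fintype.prod_sum fun i b => f i b b).symm

lemma conjTranspose_prodMat (f : Fin n → Matrix (Fin 2) (Fin 2) ℂ) :
    (prodMat f)ᴴ = prodMat fun i => (f i)ᴴ := by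
  ext x y
  simp [prodMat, Matrix.conjTranspose_apply]

lemma prodMat_commute {f g : Fin n → Matrix (Fin 2) (Fin 2) ℂ}
    (h : ∀ i, f i = 1 ∨ g i = 1) : Commute (prodMat f) (prodMat g) := by
  rw [Commute, SemiconjBy, prodMat_mul, prodMat_mul]
  congr 1
  funext i
  rcases h i with h | h <;> simp [h]

lemma prodMat_apply_eq_mul (f : Fin n → Matrix (Fin 2) (Fin 2) ℂ) (i : Fin n) (x y : Idx n) :
    prodMat f x y = f i (x i) (y i) * ∏ j ∈ {i}ᶜ, f j (x j) (y j) :=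
  Fintype.prod_eq_mul_prod_compl i _

end ProdMat

section DualBasis

variable (lam : Fin n → ℝ)

lemma trace_Qmat_mul_Qdual (α β : Fin n → Fin 4) :
    (Qmat lam α * Qdual lam β).trace = if α = β then 1 else 0 := by
  simp only [Qmat_eq_prodMat, Qdual_eq_prodMat, prodMat_mul, trace_prodMat,
    trace_wauli_mul_dualWauli, Finset.prod_boole, funext_iff, Finset.mem_univ, true_implies]

lemma trace_Qdual_mul_Qmat (α β : Fin n → Fin 4) :
    (Qdual lam α * Qmat lam β).trace = if β = α then 1 else 0 := by
  rw [Matrix.trace_mul_comm, trace_Qmat_mul_Qdual]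

lemma trace_Qmat (β : Fin n → Fin 4) : (Qmat lam β).trace = if β = 0 then 1 else 0 := by
  simp only [Qmat_eq_prodMat, trace_prodMat, trace_wauli, Finset.prod_boole, funext_iff,
    Finset.mem_univ, true_implies, Pi.zero_apply]

lemma conjTranspose_Qmat (α : Fin n → Fin 4) : (Qmat lam α)ᴴ = Qmat lam α := by
  simp only [Qmat_eq_prodMat, conjTranspose_prodMat, conjTranspose_wauli]

lemma conjTranspose_Qdual (α : Fin n → Fin 4) : (Qdual lam α)ᴴ = Qdual lam α := by
  simp only [Qdual_eq_prodMat, conjTranspose_prodMat, conjTranspose_dualWauli]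

lemma QCoeff_Qdual (α β : Fin n → Fin 4) :
    QCoeff lam (Qdual lam β) α = if α = β then 1 else 0 :=
  trace_Qmat_mul_Qdual lam α β

lemma QCoeff_zero (α : Fin n → Fin 4) : QCoeff lam 0 α = 0 := by
  simp [QCoeff]

lemma QCoeff_add (M N : Op n) (α : Fin n → Fin 4) :
    QCoeff lam (M + N) α = QCoeff lam M α + QCoeff lam N α := by
  simp [QCoeff, Matrix.mul_add]

lemma QCoeff_smul (c : ℂ) (M : Op n) (α : Fin n → Fin 4) :
    QCoeff lam (c • M) α = c * QCoeff lam M α := by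
  simp [QCoeff]

lemma QCoeff_sum {ι : Type*} (s : Finset ι) (M : ι → Op n) (α : Fin n → Fin 4) :
    QCoeff lam (∑ j ∈ s, M j) α = ∑ j ∈ s, QCoeff lam (M j) α := by
  simp [QCoeff, Matrix.mul_sum]

lemma Qdual_ne_zero (α : Fin n → Fin 4) : Qdual lam α ≠ 0 := fun h => by
  simpa [h, QCoeff] using QCoeff_Qdual lam α α

lemma linearIndependent_Qdual : LinearIndependent ℂ (Qdual (n := n) lam) := by
  rw [Fintype.linearIndependent_iff]
  intro c hc β
  simpa [QCoeff_sum, QCoeff_smul, QCoeff_Qdual, QCoeff_zero] using congrArg (QCoeff lam · β) hc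

/-- `4 ^ n` independent vectors in a space of dimension `(2 ^ n) ^ 2`. -/
def QdualBasis : Module.Basis (Fin n → Fin 4) ℂ (Op n) :=
  basisOfLinearIndependentOfCardEqFinrank (linearIndependent_Qdual lam) <| by
    simp [Module.finrank_matrix, ← mul_pow]

lemma sum_QCoeff_smul_Qdual (M : Op n) : ∑ α, QCoeff lam M α • Qdual lam α = M := by
  have hb : ⇑(QdualBasis lam) = Qdual lam := coe_basisOfLinearIndependentOfCardEqFinrank _ _
  have hrepr := (QdualBasis lam).sum_repr M
  rw [hb] at hrepr
  have hcoeff : ∀ β, QCoeff lam M β = (QdualBasis lam).repr M β := fun β => by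
    conv_lhs => rw [← hrepr]
    simp [QCoeff_sum, QCoeff_smul, QCoeff_Qdual]
  simpa only [hcoeff] using hrepr

lemma ext_QCoeff {M N : Op n} (h : ∀ β, QCoeff lam M β = QCoeff lam N β) : M = N := by
  rw [← sum_QCoeff_smul_Qdual lam M, ← sum_QCoeff_smul_Qdual lam N]
  simp only [h]

lemma mem_span_Qdual_iff (P : (Fin n → Fin 4) → Prop) (M : Op n) :
    M ∈ Submodule.span ℂ {Q | ∃ α, P α ∧ Q = Qdual lam α} ↔
      ∀ α, QCoeff lam M α ≠ 0 → P α := by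
  constructor
  · intro hM
    induction hM using Submodule.span_induction with
    | mem Q hQ =>
      obtain ⟨β, hβ, rfl⟩ := hQ
      intro α hα
      rw [QCoeff_Qdual] at hα
      split_ifs at hα with hαβ
      · exact hαβ ▸ hβ
      · exact absurd rfl hα
    | zero => simp [QCoeff_zero]
    | add M N _ _ hM hN =>
      intro α hα
      by_cases h : QCoeff lam M α = 0
      · exact hN α (by rwa [QCoeff_add, h, zero_add] at hα)
      · exact hM α h
    | smul c M _ hM =>
      intro α hα
      rw [QCoeff_smul] at hα
      exact hM α (right_ne_zero_of_mul hα)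
  · intro h
    rw [← sum_QCoeff_smul_Qdual lam M]
    refine Submodule.sum_mem _ fun α _ => ?_
    by_cases hα : QCoeff lam M α = 0
    · simp [hα]
    · exact Submodule.smul_mem _ _ (Submodule.subset_span ⟨α, h α hα, rfl⟩)

lemma mem_Sk_iff (k : ℕ) (M : Op n) :
    M ∈ Sk lam k ↔ ∀ α, QCoeff lam M α ≠ 0 → (suppStr α).card ≤ k :=
  mem_span_Qdual_iff lam _ M

end DualBasis

section Support

lemma SupportedOn.conjTranspose {S : Set (Fin n)} {M : Op n} (h : SupportedOn S M) :
    SupportedOn S Mᴴ := by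
  refine ⟨fun x y ⟨i, hiS, hixy⟩ => ?_, fun x y x' y' h1 h2 h3 h4 => ?_⟩
  · rw [Matrix.conjTranspose_apply, h.1 y x ⟨i, hiS, Ne.symm hixy⟩, star_zero]
  · rw [Matrix.conjTranspose_apply, Matrix.conjTranspose_apply,
      h.2 y x y' x' h2 h1 (fun i hi => (h3 i hi).symm) (fun i hi => (h4 i hi).symm)]

def supportedOnSubmodule (S : Set (Fin n)) : Submodule ℂ (Op n) where
  carrier := {M | SupportedOn S M}
  add_mem' {M N} hM hN :=
    ⟨fun x y h => by simp [hM.1 x y h, hN.1 x y h], fun x y x' y' h1 h2 h3 h4 => by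
      simp [hM.2 x y x' y' h1 h2 h3 h4, hN.2 x y x' y' h1 h2 h3 h4]⟩
  zero_mem' := ⟨fun _ _ _ => rfl, fun _ _ _ _ _ _ _ _ => rfl⟩
  smul_mem' c M hM :=
    ⟨fun x y h => by simp [hM.1 x y h], fun x y x' y' h1 h2 h3 h4 => by
      simp [hM.2 x y x' y' h1 h2 h3 h4]⟩

lemma supportedOn_prodMat {S : Set (Fin n)} {f : Fin n → Matrix (Fin 2) (Fin 2) ℂ}
    (hf : ∀ i ∉ S, f i = 1) : SupportedOn S (prodMat f) := by
  refine ⟨fun x y ⟨i, hiS, hixy⟩ => ?_, fun x y x' y' h1 h2 h3 h4 => ?_⟩ <;>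
    simp only [prodMat, Matrix.of_apply]
  · exact Finset.prod_eq_zero (Finset.mem_univ i) (by simp [hf i hiS, hixy])
  · refine Finset.prod_congr rfl fun i _ => ?_
    by_cases hi : i ∈ S
    · rw [h1 i hi, h2 i hi]
    · simp [hf i hi, h3 i hi, h4 i hi]

lemma dualWauli_eq_one_of_notMem_suppStr (lam : Fin n → ℝ) {α : Fin n → Fin 4} {i : Fin n}
    (hi : i ∉ suppStr α) : dualWauli (lam i) (α i) = 1 := by
  simp only [suppStr, Finset.mem_filter, Finset.mem_univ, true_and, not_not] at hi
  simp [hi, dualWauli]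

lemma supportedOn_Qdual (lam : Fin n → ℝ) {S : Set (Fin n)} {α : Fin n → Fin 4}
    (hα : ↑(suppStr α) ⊆ S) : SupportedOn S (Qdual lam α) :=
  supportedOn_prodMat fun _ hi => dualWauli_eq_one_of_notMem_suppStr lam fun h => hi (hα h)

lemma SupportedOn.apply_add_single {S : Set (Fin n)} {M : Op n} (hM : SupportedOn S M)
    {i : Fin n} (hi : i ∉ S) (z x : Idx n) :
    M (z + Pi.single i 1) (x + Pi.single i 1) = M z x := by
  have hS : ∀ j ∈ S, ∀ w : Idx n, (w + Pi.single i 1 : Idx n) j = w j := fun j hj w => by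
    simp [show j ≠ i from fun h => hi (h ▸ hj)]
  by_cases hzx : ∀ j ∉ S, z j = x j
  · refine (hM.2 z x _ _ (fun j hj => (hS j hj z).symm) (fun j hj => (hS j hj x).symm) hzx
      fun j hj => ?_).symm
    simp [hzx j hj]
  · push Not at hzx
    obtain ⟨j, hj, hzxj⟩ := hzx
    rw [hM.1 z x ⟨j, hj, hzxj⟩, hM.1 _ _ ⟨j, hj, by simpa using hzxj⟩]

lemma Qmat_apply_add_single (lam : Fin n → ℝ) {β : Fin n → Fin 4} {i : Fin n}
    (hβ : i ∈ suppStr β) {x z : Idx n} (hxz : x i = z i) :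
    Qmat lam β (x + Pi.single i 1) (z + Pi.single i 1) = -Qmat lam β x z := by
  have hβi : β i ≠ 0 := by simpa [suppStr] using hβ
  have hrest : ∀ j ∈ ({i}ᶜ : Finset (Fin n)), ∀ w : Idx n, (w + Pi.single i 1 : Idx n) j = w j :=
    fun j hj w => by simp [show j ≠ i by simpa using hj]
  rw [Qmat_eq_prodMat, prodMat_apply_eq_mul _ i, prodMat_apply_eq_mul _ i,
    Finset.prod_congr rfl fun j hj => by rw [hrest j hj x, hrest j hj z]]
  simp [hxz, wauli_add_one_add_one _ hβi]

lemma QCoeff_eq_zero_of_supportedOn (lam : Fin n → ℝ) {S : Set (Fin n)} {M : Op n}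
    (hM : SupportedOn S M) {β : Fin n → Fin 4} {i : Fin n} (hi : i ∈ suppStr β) (hiS : i ∉ S) :
    QCoeff lam M β = 0 := by
  let g : Idx n → Idx n → ℂ := fun x z => Qmat lam β x z * M z x
  have hflip : ∀ x z, g (x + Pi.single i 1) (z + Pi.single i 1) = -g x z := fun x z => by
    simp only [g, hM.apply_add_single hiS]
    by_cases hxz : x i = z i
    · rw [Qmat_apply_add_single lam hi hxz, neg_mul]
    · rw [hM.1 z x ⟨i, hiS, Ne.symm hxz⟩, mul_zero, mul_zero, neg_zero]
  have hcoeff : QCoeff lam M β = ∑ x, ∑ z, g x z := rfl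
  -- Flipping qubit `i` in both indices is a bijection that negates every term.
  have hsum : ∑ x, ∑ z, g x z = -∑ x, ∑ z, g x z := by
    let t : Idx n ≃ Idx n := Equiv.addRight (Pi.single i 1)
    calc ∑ x, ∑ z, g x z = ∑ x, ∑ z, g (t x) (t z) := by
          rw [← Equiv.sum_comp t]
          exact Finset.sum_congr rfl fun x _ => (Equiv.sum_comp t (g (t x))).symm
      _ = -∑ x, ∑ z, g x z := by simp [t, hflip]
  rw [hcoeff]
  exact CharZero.eq_neg_self_iff.mp hsum

lemma supportedOn_iff_QCoeff (lam : Fin n → ℝ) {S : Set (Fin n)} {M : Op n} :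
    SupportedOn S M ↔ ∀ β, QCoeff lam M β ≠ 0 → ↑(suppStr β) ⊆ S := by
  refine ⟨fun hM β hβ i hi => ?_, fun h => ?_⟩
  · by_contra hiS
    exact hβ (QCoeff_eq_zero_of_supportedOn lam hM hi hiS)
  · rw [← sum_QCoeff_smul_Qdual lam M]
    refine (supportedOnSubmodule S).sum_mem fun β _ => ?_
    by_cases hβ : QCoeff lam M β = 0
    · rw [hβ, zero_smul]
      exact (supportedOnSubmodule S).zero_mem
    · exact (supportedOnSubmodule S).smul_mem _ (supportedOn_Qdual lam (h β hβ))

lemma supportedOn_iff_mem_span (lam : Fin n → ℝ) {S : Set (Fin n)} {M : Op n} :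
    SupportedOn S M ↔ M ∈ Submodule.span ℂ {Q | ∃ α, ↑(suppStr α) ⊆ S ∧ Q = Qdual lam α} :=
  (supportedOn_iff_QCoeff lam).trans (mem_span_Qdual_iff lam _ M).symm

lemma subset_suppOp_of_QCoeff_ne_zero (lam : Fin n → ℝ) {M : Op n} {β : Fin n → Fin 4}
    (h : QCoeff lam M β ≠ 0) : ↑(suppStr β) ⊆ suppOp M :=
  fun _ hi _ hS => (supportedOn_iff_QCoeff lam).1 hS β h hi

-- The characterization holds for every `lam`; `0` is an arbitrary choice.
lemma SupportedOn.mono {S T : Set (Fin n)} {M : Op n} (h : SupportedOn S M) (hST : S ⊆ T) :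
    SupportedOn T M :=
  (supportedOn_iff_QCoeff 0).2 fun β hβ => ((supportedOn_iff_QCoeff 0).1 h β hβ).trans hST

lemma SupportedOn.mul {S : Set (Fin n)} {A B : Op n} (hA : SupportedOn S A)
    (hB : SupportedOn S B) : SupportedOn S (A * B) := by
  rw [supportedOn_iff_mem_span 0] at hA hB ⊢
  have hAB := Submodule.mul_mem_mul hA hB
  rw [Submodule.span_mul_span] at hAB
  refine Submodule.span_le.2 ?_ hAB
  rintro _ ⟨_, ⟨α, hα, rfl⟩, _, ⟨β, hβ, rfl⟩, rfl⟩
  rw [SetLike.mem_coe, ← supportedOn_iff_mem_span]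
  dsimp only
  rw [Qdual_eq_prodMat, Qdual_eq_prodMat, prodMat_mul]
  refine supportedOn_prodMat fun i hi => ?_
  rw [dualWauli_eq_one_of_notMem_suppStr 0 fun h => hi (hα h),
    dualWauli_eq_one_of_notMem_suppStr 0 fun h => hi (hβ h), mul_one]

lemma SupportedOn.commute {S T : Set (Fin n)} {A B : Op n} (hA : SupportedOn S A)
    (hB : SupportedOn T B) (hST : Disjoint S T) : Commute A B := by
  rw [supportedOn_iff_mem_span 0] at hA hB
  refine Algebra.commute_of_mem_adjoin_of_forall_mem_commute (Algebra.span_le_adjoin ℂ _ hB) ?_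
  rintro _ ⟨β, hβ, rfl⟩
  refine (Algebra.commute_of_mem_adjoin_of_forall_mem_commute
    (Algebra.span_le_adjoin ℂ _ hA) ?_).symm
  rintro _ ⟨α, hα, rfl⟩
  refine prodMat_commute fun i => ?_
  by_cases hi : i ∈ suppStr β
  · exact Or.inr (dualWauli_eq_one_of_notMem_suppStr 0 fun h =>
      hST.notMem_of_mem_left (hα h) (hβ hi))
  · exact Or.inl (dualWauli_eq_one_of_notMem_suppStr 0 hi)

end Support

/-- `A'` is the Heisenberg-picture dual `∑ⱼ Fⱼ† A Fⱼ`. -/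
lemma IsChannelOn.exists_dual {S T : Set (Fin n)} {E : SOp n} (hE : IsChannelOn S E)
    {A : Op n} (hA : SupportedOn T A) :
    ∃ A' : Op n, (∀ ρ, (A * E ρ).trace = (A' * ρ).trace) ∧ SupportedOn (T ∪ S) A' ∧
      (Disjoint S T → A' = A) := by
  obtain ⟨m, F, hF, hFsum, hEF⟩ := hE
  refine ⟨∑ j, (F j)ᴴ * A * F j, fun ρ => ?_, ?_, fun hST => ?_⟩
  · simp only [hEF, Matrix.mul_sum, Matrix.sum_mul, Matrix.trace_sum]
    refine Finset.sum_congr rfl fun j _ => ?_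
    simp only [mul_assoc]
    rw [Matrix.trace_mul_comm (F j)ᴴ]
    simp only [mul_assoc]
  · exact (supportedOnSubmodule _).sum_mem fun j _ =>
      (((hF j).conjTranspose.mono Set.subset_union_right).mul
        (hA.mono Set.subset_union_left)).mul ((hF j).mono Set.subset_union_right)
  · calc ∑ j, (F j)ᴴ * A * F j = ∑ j, A * ((F j)ᴴ * F j) := by
          refine Finset.sum_congr rfl fun j _ => ?_
          rw [((hF j).conjTranspose.commute hA hST).eq, mul_assoc]
      _ = A := by rw [← Finset.mul_sum, hFsum, mul_one]

section Adjoint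

variable (lam : Fin n → ℝ)

lemma QCoeff_of_isHSAdjoint {E Estar : SOp n} (h : IsHSAdjoint E Estar) (α β : Fin n → Fin 4) :
    QCoeff lam (Estar (Qdual lam α)) β = star (Qdual lam α * E (Qmat lam β)).trace := by
  have h1 := h (Qdual lam α) (Qmat lam β)
  rw [conjTranspose_Qdual] at h1
  rw [← h1, ← Matrix.trace_conjTranspose, Matrix.conjTranspose_mul,
    Matrix.conjTranspose_conjTranspose, conjTranspose_Qmat, QCoeff]

lemma IsHSAdjoint.exists_smul_Qdual {E Estar : SOp n} (h : IsHSAdjoint E Estar)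
    (hE : ∀ β, ∃ c : ℂ, E (Qmat lam β) = c • Qmat lam β) (α : Fin n → Fin 4) :
    ∃ c : ℂ, Estar (Qdual lam α) = c • Qdual lam α := by
  choose c hc using hE
  refine ⟨star (c α), ext_QCoeff lam fun β => ?_⟩
  rw [QCoeff_of_isHSAdjoint lam h, hc, Matrix.mul_smul, Matrix.trace_smul, trace_Qdual_mul_Qmat,
    QCoeff_smul, QCoeff_Qdual]
  by_cases hβα : β = α <;> simp [hβα]

end Adjoint

lemma LinearMap.apply_eq_inv_smul_of_apply_eq_smul {K V : Type*} [Field K] [AddCommGroup V]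
    [Module K V] {f : V → V} {g : V →ₗ[K] V} (hgf : ∀ v, g (f v) = v) {v : V} (hv : v ≠ 0)
    {c : K} (hc : f v = c • v) : g v = c⁻¹ • v := by
  have hc0 : c ≠ 0 := by
    rintro rfl
    rw [← hgf v, hc, zero_smul, map_zero] at hv
    exact hv rfl
  calc g v = c⁻¹ • g (f v) := by rw [hc, map_smul, smul_smul, inv_mul_cancel₀ hc0, one_smul]
    _ = c⁻¹ • v := by rw [hgf]

section Dissipator

/-- The reset map `D_i(ρ) = Tr_i(ρ) ⊗ W_i`. -/
def resetAt (l : ℝ) (i : Fin n) (ρ : Op n) : Op n :=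
  Matrix.of fun x y =>
    (∑ b : Fin 2, ρ (Function.update x i b) (Function.update y i b)) * Wmat l (x i) (y i)

variable (lam : Fin n → ℝ)

lemma resetAt_Qmat (i : Fin n) (β : Fin n → Fin 4) :
    resetAt (lam i) i (Qmat lam β) = if β i = 0 then Qmat lam β else 0 := by
  ext x y
  have hupdate : ∀ b, Qmat lam β (Function.update x i b) (Function.update y i b) =
      wauli (lam i) (β i) b b * ∏ j ∈ {i}ᶜ, wauli (lam j) (β j) (x j) (y j) := fun b => by
    rw [Qmat_eq_prodMat, prodMat_apply_eq_mul _ i, Function.update_self, Function.update_self]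
    congr 1
    refine Finset.prod_congr rfl fun j hj => ?_
    rw [Function.update_of_ne (by simpa using hj), Function.update_of_ne (by simpa using hj)]
  simp only [resetAt, Matrix.of_apply, hupdate, ← Finset.sum_mul]
  change (wauli (lam i) (β i)).trace * _ * _ = _
  rw [trace_wauli]
  split_ifs with hβ
  · rw [Qmat_eq_prodMat, prodMat_apply_eq_mul _ i, hβ]
    simp only [wauli, Matrix.cons_val_zero]
    ring
  · simp

lemma exists_smul_Qmat_of_eq_sum_resetAt {E0 : SOp n} {q : Fin n → ℝ}
    (hE0 : ∀ ρ, E0 ρ = ∑ i, q i • resetAt (lam i) i ρ) (β : Fin n → Fin 4) :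
    ∃ c : ℂ, E0 (Qmat lam β) = c • Qmat lam β := by
  refine ⟨∑ i, if β i = 0 then (q i : ℂ) else 0, ?_⟩
  rw [hE0, Finset.sum_smul]
  refine Finset.sum_congr rfl fun i _ => ?_
  rw [resetAt_Qmat]
  split_ifs <;> simp [← Complex.coe_smul]

lemma exists_smul_Qmat_of_eq_sub_add_trace_smul {E0 K : SOp n}
    (hE0 : ∀ β, ∃ c : ℂ, E0 (Qmat lam β) = c • Qmat lam β)
    (hK : ∀ ρ, K ρ = ρ - E0 ρ + ρ.trace • Qmat lam 0) (β : Fin n → Fin 4) :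
    ∃ c : ℂ, K (Qmat lam β) = c • Qmat lam β := by
  obtain ⟨c, hc⟩ := hE0 β
  by_cases hβ : β = 0
  · subst hβ
    exact ⟨1 - c + 1, by rw [hK, hc, trace_Qmat, if_pos rfl]; module⟩
  · exact ⟨1 - c, by rw [hK, hc, trace_Qmat, if_neg hβ]; module⟩

end Dissipator

section Graph

variable {G : SimpleGraph (Fin n)}

lemma card_le_and_subset_Ball_of_subset_union_edge {a b : Fin n} (hab : G.Adj a b)
    {A B : Finset (Fin n)} (hA : a ∈ A ∨ b ∈ A) (hB : ↑B ⊆ (↑A ∪ {a, b} : Set (Fin n))) :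
    B.card ≤ A.card + 1 ∧ ↑B ⊆ Ball G ↑A 1 := by
  wlog ha : a ∈ A generalizing a b
  · exact this hab.symm hA.symm (by rwa [Set.pair_comm]) (hA.resolve_left ha)
  have hBA : B ⊆ insert b A := fun v hv => by
    rcases hB hv with hv | rfl | rfl
    · exact Finset.mem_insert_of_mem hv
    · exact Finset.mem_insert_of_mem ha
    · exact Finset.mem_insert_self _ _
  refine ⟨(Finset.card_le_card hBA).trans (Finset.card_insert_le _ _), fun v hv => ?_⟩
  rcases Finset.mem_insert.1 (hBA hv) with rfl | hv
  · exact ⟨a, ha, .cons hab .nil, by simp⟩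
  · exact ⟨v, hv, .nil, by simp⟩

variable (lam : Fin n → ℝ)

lemma card_le_and_subset_Ball_of_trace_mul_channel_ne_zero {e : Sym2 (Fin n)}
    (he : e ∈ G.edgeSet) {F : SOp n} (hF : IsChannelOn (edgeQubits e) F)
    {α β : Fin n → Fin 4} (hβα : β ≠ α) (h : (Qdual lam α * F (Qmat lam β)).trace ≠ 0) :
    (suppStr β).card ≤ (suppStr α).card + 1 ∧ ↑(suppStr β) ⊆ Ball G ↑(suppStr α) 1 := by
  induction e using Sym2.ind with
  | h a b =>
    have hedge : edgeQubits s(a, b) = {a, b} := by ext; simp [edgeQubits]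
    rw [hedge] at hF
    obtain ⟨A, hAρ, hAsupp, hAeq⟩ := hF.exists_dual (supportedOn_Qdual lam subset_rfl)
    rw [hAρ, Matrix.trace_mul_comm] at h
    refine card_le_and_subset_Ball_of_subset_union_edge (G.mem_edgeSet.1 he) ?_
      ((supportedOn_iff_QCoeff lam).1 hAsupp β h)
    by_contra hab
    push Not at hab
    refine h ?_
    rw [hAeq (Set.disjoint_left.2 fun v hv hvα => ?_)]
    · exact (QCoeff_Qdual lam β α).trans (if_neg hβα)
    · rcases hv with rfl | rfl
      exacts [hab.1 hvα, hab.2 hvα]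

lemma card_le_and_subset_Ball_of_QCoeff_adjoint_ne_zero [Fintype G.edgeSet]
    {p : Sym2 (Fin n) → ℝ} {F : Sym2 (Fin n) → SOp n}
    (hF : ∀ e ∈ G.edgeSet, IsChannelOn (edgeQubits e) (F e)) {E0 E1 E1star : SOp n}
    (hE0 : ∀ β, ∃ c : ℂ, E0 (Qmat lam β) = c • Qmat lam β)
    (hE1 : ∀ ρ, E1 ρ = (∑ e ∈ G.edgeFinset, p e • F e ρ) - E0 ρ) (hadj : IsHSAdjoint E1 E1star)
    {α β : Fin n → Fin 4} (h : QCoeff lam (E1star (Qdual lam α)) β ≠ 0) :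
    (suppStr β).card ≤ (suppStr α).card + 1 ∧ ↑(suppStr β) ⊆ Ball G ↑(suppStr α) 1 := by
  by_cases hβα : β = α
  · subst hβα
    exact ⟨Nat.le_succ _, fun v hv => ⟨v, hv, .nil, by simp⟩⟩
  obtain ⟨c, hc⟩ := hE0 β
  rw [QCoeff_of_isHSAdjoint lam hadj, star_ne_zero, hE1, hc, Matrix.mul_sub, Matrix.trace_sub,
    Matrix.mul_smul, Matrix.trace_smul, trace_Qdual_mul_Qmat, if_neg hβα, smul_zero, sub_zero,
    Matrix.mul_sum, Matrix.trace_sum] at h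
  obtain ⟨e, he, hne⟩ := Finset.exists_ne_zero_of_sum_ne_zero h
  refine card_le_and_subset_Ball_of_trace_mul_channel_ne_zero lam (G.mem_edgeFinset.1 he)
    (hF e (G.mem_edgeFinset.1 he)) hβα fun h0 => hne ?_
  rw [Matrix.mul_smul, Matrix.trace_smul, h0, smul_zero]

lemma map_mem_Sk_succ_and_suppOp_subset_Ball {T : SOp n}
    (hT : ∀ α β, QCoeff lam (T (Qdual lam α)) β ≠ 0 →
      (suppStr β).card ≤ (suppStr α).card + 1 ∧ ↑(suppStr β) ⊆ Ball G ↑(suppStr α) 1)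
    {k : ℕ} {O : Op n} (hO : O ∈ Sk lam k) :
    T O ∈ Sk lam (k + 1) ∧ suppOp (T O) ⊆ Ball G (suppOp O) 1 := by
  have hspread : ∀ β, QCoeff lam (T O) β ≠ 0 →
      ∃ α, QCoeff lam O α ≠ 0 ∧ QCoeff lam (T (Qdual lam α)) β ≠ 0 := fun β hβ => by
    rw [← sum_QCoeff_smul_Qdual lam O, map_sum, QCoeff_sum] at hβ
    obtain ⟨α, -, hα⟩ := Finset.exists_ne_zero_of_sum_ne_zero hβ
    rw [map_smul, QCoeff_smul] at hα
    exact ⟨α, left_ne_zero_of_mul hα, right_ne_zero_of_mul hα⟩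
  constructor
  · refine (mem_Sk_iff lam _ _).2 fun β hβ => ?_
    obtain ⟨α, hOα, hTα⟩ := hspread β hβ
    have hα := (mem_Sk_iff lam k O).1 hO α hOα
    have hβα := (hT α β hTα).1
    omega
  · refine fun v hv => hv _ ((supportedOn_iff_QCoeff lam).2 fun β hβ => ?_)
    obtain ⟨α, hOα, hTα⟩ := hspread β hβ
    refine (hT α β hTα).2.trans ?_
    rintro v ⟨u, hu, w, hw⟩
    exact ⟨u, subset_suppOp_of_QCoeff_ne_zero lam hOα hu, w, hw⟩

end Graph

theorem T_maps_Sk_to_Sk_succ_general {n : ℕ}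
    (G : SimpleGraph (Fin n)) [DecidableRel G.Adj]
    (lam : Fin n → ℝ)
    (p : Sym2 (Fin n) → ℝ)
    (q : Fin n → ℝ)
    (D : Fin n → SOp n)
    (hD : ∀ i (ρ : Op n), D i ρ = Matrix.of fun x y =>
      (∑ b : Fin 2, ρ (Function.update x i b) (Function.update y i b)) *
        Wmat (lam i) (x i) (y i))
    (F : Sym2 (Fin n) → SOp n)
    (hF : ∀ e ∈ G.edgeSet, IsChannelOn (edgeQubits e) (F e))
    (E0 : SOp n) (hE0 : ∀ ρ : Op n, E0 ρ = ∑ i, q i • D i ρ)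
    (E1 : SOp n)
    (hE1 : ∀ ρ : Op n, E1 ρ = (∑ e ∈ G.edgeFinset, p e • F e ρ) - E0 ρ)
    (K : SOp n)
    (hK : ∀ ρ : Op n, K ρ = ρ - E0 ρ + ρ.trace • Qmat lam 0)
    (E1star Kstar KstarInv : SOp n)
    (hadj1 : IsHSAdjoint E1 E1star) (hadjK : IsHSAdjoint K Kstar)
    (hinv2 : ∀ O : Op n, KstarInv (Kstar O) = O)
    (T : SOp n) (hT : ∀ O : Op n, T O = E1star (KstarInv O))
    (k : ℕ) (O : Op n) (hO : O ∈ Sk lam k) :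
    T O ∈ Sk lam (k + 1) ∧
    suppOp (T O) ⊆ Ball G (suppOp O) 1 := by
  have hE0diag : ∀ β, ∃ c : ℂ, E0 (Qmat lam β) = c • Qmat lam β :=
    exists_smul_Qmat_of_eq_sum_resetAt lam fun ρ => by simp only [hE0, hD]; rfl
  have hKinv : ∀ α, ∃ c : ℂ, KstarInv (Qdual lam α) = c • Qdual lam α := fun α => by
    obtain ⟨c, hc⟩ := hadjK.exists_smul_Qdual lam
      (exists_smul_Qmat_of_eq_sub_add_trace_smul lam hE0diag hK) α
    exact ⟨c⁻¹, LinearMap.apply_eq_inv_smul_of_apply_eq_smul hinv2 (Qdual_ne_zero lam α) hc⟩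
  refine map_mem_Sk_succ_and_suppOp_subset_Ball lam (fun α β hβ => ?_) hO
  obtain ⟨c, hc⟩ := hKinv α
  rw [hT, hc, map_smul, QCoeff_smul] at hβ
  exact card_le_and_subset_Ball_of_QCoeff_adjoint_ne_zero lam hF hE0diag hE1 hadj1
    (right_ne_zero_of_mul hβ)

/-- the transition super-operator `T = E₁* ∘ (K*)⁻¹` maps
`S_k` into `S_{k+1}`, and expands supports by at most one step on the
graph. -/
theorem T_maps_Sk_to_Sk_succ {n : ℕ}
    (G : SimpleGraph (Fin n)) [DecidableRel G.Adj]
    (lam : Fin n → ℝ) (hlam : ∀ i, 0 ≤ lam i ∧ lam i < 1)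
    (p : Sym2 (Fin n) → ℝ) (hp0 : ∀ e, 0 ≤ p e)
    (hpsupp : ∀ e ∉ G.edgeSet, p e = 0)
    (hpsum : ∑ e ∈ G.edgeFinset, p e = 1)
    (q : Fin n → ℝ)
    (hqdef : ∀ i, q i = (1 / 2) * ∑ e ∈ G.edgeFinset.filter (fun e => i ∈ e), p e)
    (hqpos : ∀ i, 0 < q i)
    (D : Fin n → SOp n)
    (hD : ∀ i (ρ : Op n), D i ρ = Matrix.of fun x y =>
      (∑ b : Fin 2, ρ (Function.update x i b) (Function.update y i b)) *
        Wmat (lam i) (x i) (y i))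
    (F : Sym2 (Fin n) → SOp n)
    (hF : ∀ e ∈ G.edgeSet, IsChannelOn (edgeQubits e) (F e))
    (E0 : SOp n) (hE0 : ∀ ρ : Op n, E0 ρ = ∑ i, q i • D i ρ)
    (E1 : SOp n)
    (hE1 : ∀ ρ : Op n, E1 ρ = (∑ e ∈ G.edgeFinset, p e • F e ρ) - E0 ρ)
    (K : SOp n)
    (hK : ∀ ρ : Op n, K ρ = ρ - E0 ρ + ρ.trace • Qmat lam 0)
    (E1star Kstar KstarInv : SOp n)
    (hadj1 : IsHSAdjoint E1 E1star) (hadjK : IsHSAdjoint K Kstar)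
    (hinv1 : ∀ O : Op n, Kstar (KstarInv O) = O)
    (hinv2 : ∀ O : Op n, KstarInv (Kstar O) = O)
    (T : SOp n) (hT : ∀ O : Op n, T O = E1star (KstarInv O))
    (k : ℕ) (O : Op n) (hO : O ∈ Sk lam k) :
    T O ∈ Sk lam (k + 1) ∧
    suppOp (T O) ⊆ Ball G (suppOp O) 1 :=
  T_maps_Sk_to_Sk_succ_general G lam p q D hD F hF E0 hE0 E1 hE1 K hK E1star Kstar KstarInv hadj1
    hadjK hinv2 T hT k O hO

end

end SSP
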